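/- Let p : [0,1] → [0,1] be continuous and strictly increasing. For the same parameters (β, y, r, f, t, p), let (x_B, P_B) be any Bayesian endogenous equilibrium and (x_I, P_I) any non-Bayesian endogenous equilibrium. Then their social costs are equal: 𝒥_B(x_B) = 𝒥_I(x_I). -/
import Mathlib

set_option maxHeartbeats 2000000

private lemma mix_min (a b c ρ : ℝ) (hc : 0 ≤ c) (hρ : 0 ≤ ρ) (hsum : c + ρ = 1)
    (h1 : 0 < c → a ≤ b) (h2 : 0 < ρ → b ≤ a) : c * a + ρ * b = min a b := by
  rcases hc.lt_or_eq with hc'|hc'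
  · rcases hρ.lt_or_eq with hρ'|hρ'
    · have hab : a = b := le_antisymm (h1 hc') (h2 hρ')
      rw [hab, min_self]
      calc c * b + ρ * b = (c + ρ) * b := by ring
        _ = b := by rw [hsum]; ring
    · have hc1 : c = 1 := by linarith
      rw [min_eq_left (h1 hc'), hc1, ← hρ']; ring
  · have hρ1 : ρ = 1 := by linarith
    rw [min_eq_right (h2 (by linarith)), hρ1, ← hc']; ring

private lemma pair_min (a b c ρ w y : ℝ) (hy : 0 ≤ y) (hw : 0 ≤ w)
    (hc : 0 ≤ c) (hρ : 0 ≤ ρ) (hsum : c + ρ = 1)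
    (hdeg : w = 0 → a = 0 ∧ b = 0)
    (h1 : 0 < c * w * y → a ≤ b) (h2 : 0 < ρ * w * y → b ≤ a) :
    y * (c * a + ρ * b) = y * min a b := by
  rcases hy.lt_or_eq with hy'|hy'
  · rcases hw.lt_or_eq with hw'|hw'
    · congr 1
      exact mix_min a b c ρ hc hρ hsum
        (fun h => h1 (mul_pos (mul_pos h hw') hy'))
        (fun h => h2 (mul_pos (mul_pos h hw') hy'))
    · obtain ⟨ha, hb⟩ := hdeg hw'.symm
      simp [ha, hb]
  · rw [← hy']; ring

private lemma mass2 (a b x1 x2 : ℝ) (h1 : 0 ≤ x1) (h2 : 0 ≤ x2)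
    (ha : 0 < x1 → a ≤ b) (hb : 0 < x2 → b ≤ a) :
    a * x1 + b * x2 = min a b * (x1 + x2) := by
  have e1 : a * x1 = min a b * x1 := by
    rcases h1.lt_or_eq with h|h
    · rw [min_eq_left (ha h)]
    · rw [← h]; ring
  have e2 : b * x2 = min a b * x2 := by
    rcases h2.lt_or_eq with h|h
    · rw [min_eq_right (hb h)]
    · rw [← h]; ring
  rw [e1, e2]; ring

private lemma mass3 (a b c x1 x2 x3 : ℝ) (h1 : 0 ≤ x1) (h2 : 0 ≤ x2) (h3 : 0 ≤ x3)
    (ha : 0 < x1 → a ≤ min b c) (hb : 0 < x2 → b ≤ min a c) (hc : 0 < x3 → c ≤ min a b) :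
    a * x1 + b * x2 + c * x3 = min (min a b) c * (x1 + x2 + x3) := by
  have e1 : a * x1 = min (min a b) c * x1 := by
    rcases h1.lt_or_eq with h|h
    · have h' := ha h
      rw [le_min_iff] at h'
      rw [le_antisymm ((min_le_left _ _).trans (min_le_left _ _))
        (le_min (le_min le_rfl h'.1) h'.2)]
    · rw [← h]; ring
  have e2 : b * x2 = min (min a b) c * x2 := by
    rcases h2.lt_or_eq with h|h
    · have h' := hb h
      rw [le_min_iff] at h'
      rw [le_antisymm ((min_le_left _ _).trans (min_le_right _ _))
        (le_min (le_min h'.1 le_rfl) h'.2)]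
    · rw [← h]; ring
  have e3 : c * x3 = min (min a b) c * x3 := by
    rcases h3.lt_or_eq with h|h
    · have h' := hc h
      rw [le_min_iff] at h'
      rw [le_antisymm (min_le_right _ _) (le_min (le_min h'.1 h'.2) le_rfl)]
    · rw [← h]; ring
  rw [e1, e2, e3]; ring

private lemma min_pair (JCu JRu JCs JRs : ℝ)
    (hJA : min (JCu+JCs) (JRu+JRs) ≤ JCu + JRs) :
    min JCu JRu + min JCs JRs = min (min (JCu+JCs) (JRu+JRs)) (JRu+JCs) := by
  apply le_antisymm
  · exact le_min (le_min (add_le_add (min_le_left _ _) (min_le_left _ _))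
      (add_le_add (min_le_right _ _) (min_le_right _ _)))
      (add_le_add (min_le_right _ _) (min_le_left _ _))
  · have m1 : min (min (JCu+JCs) (JRu+JRs)) (JRu+JCs) ≤ min (JCu+JCs) (JRu+JRs) :=
      min_le_left _ _
    have m2 : min (min (JCu+JCs) (JRu+JRs)) (JRu+JCs) ≤ JRu+JCs := min_le_right _ _
    have m3 : min (JCu+JCs) (JRu+JRs) ≤ JCu+JCs := min_le_left _ _
    have m4 : min (JCu+JCs) (JRu+JRs) ≤ JRu+JRs := min_le_right _ _
    rcases le_total JCu JRu with h|h
    · rcases le_total JCs JRs with h'|h'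
      · rw [min_eq_left h, min_eq_left h']; linarith
      · rw [min_eq_left h, min_eq_right h']; linarith
    · rcases le_total JCs JRs with h'|h'
      · rw [min_eq_right h, min_eq_left h']; linarith
      · rw [min_eq_right h, min_eq_right h']; linarith


open Set

/-- Recklessness threshold for signaled V2V drivers. -/
noncomputable def Pvs (r f t : ℝ) : ℝ := f / (r * t + f)

/-- Recklessness threshold for non-V2V drivers. -/
noncomputable def Pn (r : ℝ) : ℝ := 1 / (1 + r)

/-- Recklessness threshold for unsignaled V2V drivers. -/
noncomputable def Pvu (r β f t : ℝ) : ℝ := (1 - β * f) / (1 + r * (1 - β * t) - β * f)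

/-- Probability `σ(P)` that a warning signal is displayed when the accident probability is `P`. -/
noncomputable def sig (β f t P : ℝ) : ℝ := β * (P * t + (1 - P) * f)

/-- A Bayesian equilibrium with accident probability `P`:
`xnC, xnR` are the masses of careful/reckless non-V2V drivers, `cu, ρu` the fractions of the
unsignaled V2V population (of mass `(1-σ(P))·y`) choosing Careful/Reckless, and `cs, ρs` the
fractions of the signaled V2V population (of mass `σ(P)·y`) choosing Careful/Reckless. -/
structure BayesEq (r y β f t P xnC xnR cu ρu cs ρs : ℝ) : Prop where
  xnC_nonneg : 0 ≤ xnC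
  xnR_nonneg : 0 ≤ xnR
  cu_nonneg : 0 ≤ cu
  ρu_nonneg : 0 ≤ ρu
  cs_nonneg : 0 ≤ cs
  ρs_nonneg : 0 ≤ ρs
  sum_n : xnC + xnR = 1 - y
  sum_u : cu + ρu = 1
  sum_s : cs + ρs = 1
  best_nR : 0 < xnR → r * P ≤ 1 - P
  best_nC : 0 < xnC → 1 - P ≤ r * P
  best_ρu : 0 < ρu * (1 - sig β f t P) * y → r * P * (1 - β * t) ≤ (1 - P) * (1 - β * f)
  best_cu : 0 < cu * (1 - sig β f t P) * y → (1 - P) * (1 - β * f) ≤ r * P * (1 - β * t)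
  best_ρs : 0 < ρs * sig β f t P * y → r * P * (β * t) ≤ (1 - P) * (β * f)
  best_cs : 0 < cs * sig β f t P * y → (1 - P) * (β * f) ≤ r * P * (β * t)

/-- Social cost of a Bayesian behavior tuple. -/
noncomputable def socialCostB (r y β f t P xnC xnR cu ρu cs ρs : ℝ) : ℝ :=
  (1 - P) * xnC + r * P * xnR +
    y * (cu * ((1 - P) * (1 - β * f)) + ρu * (r * P * (1 - β * t)) +
         cs * ((1 - P) * (β * f)) + ρs * (r * P * (β * t)))

/-- A non-Bayesian equilibrium with accident probability `P`:
`xnC, xnR` are the masses of careful/reckless non-V2V drivers, and `xvC, xvR, xvT` the masses of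
V2V drivers choosing Careful/Reckless/Trust.  The costs are `J^C = 1 - P`, `J^R = r·P` and
`J^T = (1-P)·β·f + r·P·(1-β·t)`. -/
structure NonBayesEq (r y β f t P xnC xnR xvC xvR xvT : ℝ) : Prop where
  xnC_nonneg : 0 ≤ xnC
  xnR_nonneg : 0 ≤ xnR
  xvC_nonneg : 0 ≤ xvC
  xvR_nonneg : 0 ≤ xvR
  xvT_nonneg : 0 ≤ xvT
  sum_n : xnC + xnR = 1 - y
  sum_v : xvC + xvR + xvT = y
  best_nC : 0 < xnC → 1 - P ≤ r * P
  best_nR : 0 < xnR → r * P ≤ 1 - P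
  best_vC : 0 < xvC → 1 - P ≤ min (r * P) ((1 - P) * (β * f) + r * P * (1 - β * t))
  best_vR : 0 < xvR → r * P ≤ min (1 - P) ((1 - P) * (β * f) + r * P * (1 - β * t))
  best_vT : 0 < xvT → (1 - P) * (β * f) + r * P * (1 - β * t) ≤ min (1 - P) (r * P)

/-- Social cost of a non-Bayesian behavior tuple. -/
noncomputable def socialCostI (r β f t P xnC xnR xvC xvR xvT : ℝ) : ℝ :=
  (1 - P) * (xnC + xvC) + r * P * (xnR + xvR) +
    ((1 - P) * (β * f) + r * P * (1 - β * t)) * xvT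

/-- for the same parameters, any Bayesian and any non-Bayesian endogenous
equilibria have equal social cost. -/
theorem endo_social_costs_equal (r y β f t : ℝ) (p : ℝ → ℝ)
    (hr : 1 < r) (hy : y ∈ Icc (0:ℝ) 1) (hβ : β ∈ Icc (0:ℝ) 1)
    (hf : 0 ≤ f) (hft : f < t) (ht : t ≤ 1)
    (hp_cont : ContinuousOn p (Icc (0:ℝ) 1)) (hp_mono : StrictMonoOn p (Icc (0:ℝ) 1))
    (hp_maps : MapsTo p (Icc (0:ℝ) 1) (Icc (0:ℝ) 1))
    (PB xnC xnR cu ρu cs ρs PI xnC' xnR' xvC xvR xvT : ℝ)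
    (hPB : PB ∈ Icc (0:ℝ) 1) (hPI : PI ∈ Icc (0:ℝ) 1)
    (hB : BayesEq r y β f t PB xnC xnR cu ρu cs ρs)
    (hBendo : PB = p (xnR + ρu * (1 - sig β f t PB) * y + ρs * sig β f t PB * y))
    (hI : NonBayesEq r y β f t PI xnC' xnR' xvC xvR xvT)
    (hIendo : PI = p (xnR' + xvR + (1 - sig β f t PI) * xvT)) :
    socialCostB r y β f t PB xnC xnR cu ρu cs ρs =
      socialCostI r β f t PI xnC' xnR' xvC xvR xvT := by
  obtain ⟨hy0, hy1⟩ := hy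
  obtain ⟨hβ0, hβ1⟩ := hβ
  obtain ⟨hPB0, hPB1⟩ := hPB
  obtain ⟨hPI0, hPI1⟩ := hPI
  have ht0 : 0 < t := lt_of_le_of_lt hf hft
  have h1βf : 0 < 1 - β * f := by nlinarith [mul_nonneg (by linarith : (0:ℝ) ≤ 1 - β) hf]
  have h1βt : 0 ≤ 1 - β * t := by nlinarith [mul_nonneg (by linarith : (0:ℝ) ≤ 1 - β) ht0.le]
  have hsig0 : ∀ P : ℝ, 0 ≤ P → P ≤ 1 → 0 ≤ sig β f t P := by
    intro P h0 h1
    simp only [sig]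
    have : 0 ≤ P * t + (1 - P) * f := by
      nlinarith [mul_nonneg h0 ht0.le, mul_nonneg (by linarith : (0:ℝ) ≤ 1 - P) hf]
    exact mul_nonneg hβ0 this
  have hsig1 : ∀ P : ℝ, 0 ≤ P → P ≤ 1 → sig β f t P ≤ 1 := by
    intro P h0 h1
    simp only [sig]
    nlinarith [mul_nonneg hβ0 (mul_nonneg (by linarith : (0:ℝ) ≤ 1 - P)
      (by linarith : (0:ℝ) ≤ t - f)), mul_nonneg (by linarith : (0:ℝ) ≤ 1 - β) ht0.le]
  have hsig_mono : ∀ P Q : ℝ, P ≤ Q → sig β f t P ≤ sig β f t Q := by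
    intro P Q hPQ
    simp only [sig]
    nlinarith [mul_nonneg (mul_nonneg hβ0 (by linarith : (0:ℝ) ≤ t - f))
      (by linarith : (0:ℝ) ≤ Q - P)]
  have hσB0 := hsig0 PB hPB0 hPB1
  have hσB1 := hsig1 PB hPB0 hPB1
  have hσI0 := hsig0 PI hPI0 hPI1
  have hσI1 := hsig1 PI hPI0 hPI1
  have hρu1 : ρu ≤ 1 := by linarith [hB.sum_u, hB.cu_nonneg]
  have hρs1 : ρs ≤ 1 := by linarith [hB.sum_s, hB.cs_nonneg]
  have hMB0 : 0 ≤ ρu * (1 - sig β f t PB) * y + ρs * sig β f t PB * y := by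
    have := mul_nonneg (mul_nonneg hB.ρu_nonneg (by linarith : (0:ℝ) ≤ 1 - sig β f t PB)) hy0
    have := mul_nonneg (mul_nonneg hB.ρs_nonneg hσB0) hy0
    linarith
  have hMB_le_y : ρu * (1 - sig β f t PB) * y + ρs * sig β f t PB * y ≤ y := by
    nlinarith [mul_nonneg (mul_nonneg (by linarith : (0:ℝ) ≤ 1 - ρu)
        (by linarith : (0:ℝ) ≤ 1 - sig β f t PB)) hy0,
      mul_nonneg (mul_nonneg (by linarith : (0:ℝ) ≤ 1 - ρs) hσB0) hy0]
  have hMI0 : 0 ≤ xvR + (1 - sig β f t PI) * xvT := by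
    have := mul_nonneg (by linarith : (0:ℝ) ≤ 1 - sig β f t PI) hI.xvT_nonneg
    linarith [hI.xvR_nonneg]
  have hMI_le_y : xvR + (1 - sig β f t PI) * xvT ≤ y := by
    nlinarith [mul_nonneg hσI0 hI.xvT_nonneg, hI.sum_v, hI.xvC_nonneg]
  have hxnR_le : xnR ≤ 1 - y := by linarith [hB.sum_n, hB.xnC_nonneg]
  have hxnR'_le : xnR' ≤ 1 - y := by linarith [hI.sum_n, hI.xnC_nonneg]
  have hRB_mem : xnR + ρu * (1 - sig β f t PB) * y + ρs * sig β f t PB * y ∈ Icc (0:ℝ) 1 := by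
    constructor
    · linarith [hB.xnR_nonneg]
    · linarith
  have hRI_mem : xnR' + xvR + (1 - sig β f t PI) * xvT ∈ Icc (0:ℝ) 1 := by
    constructor
    · linarith [hI.xnR_nonneg, hI.xvR_nonneg,
        mul_nonneg (by linarith : (0:ℝ) ≤ 1 - sig β f t PI) hI.xvT_nonneg]
    · linarith
  -- KEY STEP 1 : PB = PI
  have key1 : ¬ PB < PI := by
    intro hlt
    have hRlt : xnR + ρu * (1 - sig β f t PB) * y + ρs * sig β f t PB * y
        < xnR' + xvR + (1 - sig β f t PI) * xvT := by
      rcases lt_trichotomy (xnR + ρu * (1 - sig β f t PB) * y + ρs * sig β f t PB * y)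
        (xnR' + xvR + (1 - sig β f t PI) * xvT) with h|h|h
      · exact h
      · exfalso; rw [hBendo, hIendo, h] at hlt; exact lt_irrefl _ hlt
      · exfalso
        have := hp_mono hRI_mem hRB_mem h
        rw [← hBendo, ← hIendo] at this
        linarith
    have hxnRc : xnR' ≤ xnR := by
      rcases hI.xnR_nonneg.lt_or_eq with h|h
      · have h1 := hI.best_nR h
        have h2 : r * PB < 1 - PB := by
          linarith [h1, mul_pos (sub_pos.2 hlt) (by linarith : (0:ℝ) < r)]
        have hxnC : xnC = 0 := by
          by_contra hc
          have := hB.best_nC (lt_of_le_of_ne hB.xnC_nonneg (Ne.symm hc))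
          linarith
        linarith [hB.sum_n, hI.sum_n, hI.xnC_nonneg]
      · linarith [hB.xnR_nonneg]
    have hσm : sig β f t PB ≤ sig β f t PI := hsig_mono PB PI hlt.le
    have hpart2 : xvR + (1 - sig β f t PI) * xvT
        ≤ ρu * (1 - sig β f t PB) * y + ρs * sig β f t PB * y := by
      rcases hI.xvR_nonneg.lt_or_eq with hR|hR
      · -- some non-Bayes V2V driver is Reckless
        have hbr := hI.best_vR hR
        have hJRC : r * PI ≤ 1 - PI := le_trans hbr (min_le_left _ _)
        have hJRT : r * PI ≤ (1 - PI) * (β * f) + r * PI * (1 - β * t) :=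
          le_trans hbr (min_le_right _ _)
        have hcs : cs * sig β f t PB * y = 0 := by
          by_contra hc
          have hpos : 0 < cs * sig β f t PB * y :=
            lt_of_le_of_ne (mul_nonneg (mul_nonneg hB.cs_nonneg hσB0) hy0) (Ne.symm hc)
          have hσpos : 0 < sig β f t PB := by
            rcases hσB0.lt_or_eq with h|h
            · exact h
            · exfalso; rw [← h] at hpos; simp at hpos
          have hβpos : 0 < β := by
            rcases hβ0.lt_or_eq with h|h
            · exact h
            · exfalso; rw [← h] at hσpos; simp [sig] at hσpos
          have hcond := hB.best_cs hpos
          have hprod : 0 < β * (PI - PB) * (f + r * t) :=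
            mul_pos (mul_pos hβpos (sub_pos.2 hlt))
              (add_pos_of_nonneg_of_pos hf (mul_pos (by linarith) ht0))
          linarith [hprod]
        have hcu : cu * (1 - sig β f t PB) * y = 0 := by
          by_contra hc
          have hpos : 0 < cu * (1 - sig β f t PB) * y :=
            lt_of_le_of_ne (mul_nonneg (mul_nonneg hB.cu_nonneg
              (by linarith)) hy0) (Ne.symm hc)
          have hcond := hB.best_cu hpos
          have hJRCu : r * PI * (1 - β * t) ≤ (1 - PI) * (1 - β * f) := by
            have hA : 0 ≤ r * PI * (β * (t - f)) :=
              mul_nonneg (mul_nonneg (by linarith) hPI0) (mul_nonneg hβ0 (by linarith))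
            have hB2 : 0 ≤ (1 - PI - r * PI) * (1 - β * f) :=
              mul_nonneg (by linarith) h1βf.le
            linarith [hA, hB2]
          have hs : 0 < r * (1 - β * t) + (1 - β * f) := by
            have := mul_nonneg (by linarith : (0:ℝ) ≤ r) h1βt
            linarith
          have hprod : 0 < (PI - PB) * (r * (1 - β * t) + (1 - β * f)) :=
            mul_pos (sub_pos.2 hlt) hs
          linarith [hprod]
        have hρueq : ρu * (1 - sig β f t PB) * y = (1 - sig β f t PB) * y := by
          linear_combination ((1 - sig β f t PB) * y) * hB.sum_u - hcu
        have hρseq : ρs * sig β f t PB * y = sig β f t PB * y := by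
          linear_combination (sig β f t PB * y) * hB.sum_s - hcs
        rw [hρueq, hρseq]
        linarith [mul_nonneg hσI0 hI.xvT_nonneg, hI.sum_v, hI.xvC_nonneg]
      · rcases hI.xvT_nonneg.lt_or_eq with hT|hT
        · -- Trusting non-Bayes V2V drivers
          have hbt := hI.best_vT hT
          have hJTC : (1 - PI) * (β * f) + r * PI * (1 - β * t) ≤ 1 - PI :=
            le_trans hbt (min_le_left _ _)
          have hJRCu : r * PI * (1 - β * t) ≤ (1 - PI) * (1 - β * f) := by linarith
          have hcu : cu * (1 - sig β f t PB) * y = 0 := by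
            by_contra hc
            have hpos : 0 < cu * (1 - sig β f t PB) * y :=
              lt_of_le_of_ne (mul_nonneg (mul_nonneg hB.cu_nonneg
                (by linarith)) hy0) (Ne.symm hc)
            have hcond := hB.best_cu hpos
            have hs : 0 < r * (1 - β * t) + (1 - β * f) := by
              have := mul_nonneg (by linarith : (0:ℝ) ≤ r) h1βt
              linarith
            have hprod : 0 < (PI - PB) * (r * (1 - β * t) + (1 - β * f)) :=
              mul_pos (sub_pos.2 hlt) hs
            linarith [hprod]
          have hρueq : ρu * (1 - sig β f t PB) * y = (1 - sig β f t PB) * y := by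
            linear_combination ((1 - sig β f t PB) * y) * hB.sum_u - hcu
          rw [hρueq, ← hR]
          have hxvT_le : xvT ≤ y := by linarith [hI.sum_v, hI.xvC_nonneg, hI.xvR_nonneg]
          linarith [mul_nonneg (mul_nonneg hB.ρs_nonneg hσB0) hy0,
            mul_nonneg (by linarith : (0:ℝ) ≤ 1 - sig β f t PI) (by linarith : (0:ℝ) ≤ y - xvT),
            mul_nonneg (by linarith : (0:ℝ) ≤ sig β f t PI - sig β f t PB) hy0]
        · rw [← hR, ← hT]
          simpa using hMB0
    linarith
  have key2 : ¬ PI < PB := by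
    intro hlt
    have hRlt : xnR' + xvR + (1 - sig β f t PI) * xvT
        < xnR + ρu * (1 - sig β f t PB) * y + ρs * sig β f t PB * y := by
      rcases lt_trichotomy (xnR' + xvR + (1 - sig β f t PI) * xvT)
        (xnR + ρu * (1 - sig β f t PB) * y + ρs * sig β f t PB * y) with h|h|h
      · exact h
      · exfalso; rw [hBendo, hIendo, h] at hlt; exact lt_irrefl _ hlt
      · exfalso
        have := hp_mono hRB_mem hRI_mem h
        rw [← hBendo, ← hIendo] at this
        linarith
    have hxnRc : xnR ≤ xnR' := by
      rcases hB.xnR_nonneg.lt_or_eq with h|h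
      · have h1 := hB.best_nR h
        have h2 : r * PI < 1 - PI := by
          linarith [h1, mul_pos (sub_pos.2 hlt) (by linarith : (0:ℝ) < r)]
        have hxnC : xnC' = 0 := by
          by_contra hc
          have := hI.best_nC (lt_of_le_of_ne hI.xnC_nonneg (Ne.symm hc))
          linarith
        linarith [hB.sum_n, hI.sum_n, hB.xnC_nonneg]
      · linarith [hI.xnR_nonneg]
    have hσm : sig β f t PI ≤ sig β f t PB := hsig_mono PI PB hlt.le
    have hpart2 : ρu * (1 - sig β f t PB) * y + ρs * sig β f t PB * y
        ≤ xvR + (1 - sig β f t PI) * xvT := by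
      rcases (mul_nonneg (mul_nonneg hB.ρs_nonneg hσB0) hy0).lt_or_eq with hS|hS
      · -- signaled Bayesian V2V drivers are Reckless
        have hcond := hB.best_ρs hS
        have hσpos : 0 < sig β f t PB := by
          rcases hσB0.lt_or_eq with h|h
          · exact h
          · exfalso; rw [← h] at hS; simp at hS
        have hβpos : 0 < β := by
          rcases hβ0.lt_or_eq with h|h
          · exact h
          · exfalso; rw [← h] at hσpos; simp [sig] at hσpos
        have h1 : r * PB * t ≤ (1 - PB) * f :=
          le_of_mul_le_mul_left (by linarith [hcond] : β * (r * PB * t) ≤ β * ((1 - PB) * f)) hβpos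
        have h2 : r * PB ≤ 1 - PB := by
          refine le_of_mul_le_mul_left (?_ : t * (r * PB) ≤ t * (1 - PB)) ht0
          have := mul_nonneg (by linarith : (0:ℝ) ≤ 1 - PB) (by linarith : (0:ℝ) ≤ t - f)
          linarith
        have hJRC' : r * PI < 1 - PI := by
          linarith [h2, mul_pos (sub_pos.2 hlt) (by linarith : (0:ℝ) < r)]
        have hJRT' : r * PI * (β * t) < (1 - PI) * (β * f) := by
          have hA : 0 < β * t * r * (PB - PI) :=
            mul_pos (mul_pos (mul_pos hβpos ht0) (by linarith)) (sub_pos.2 hlt)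
          have hB2 : 0 ≤ β * f * (PB - PI) :=
            mul_nonneg (mul_nonneg hβpos.le hf) (sub_pos.2 hlt).le
          linarith [hcond, hA, hB2]
        have hxvC : xvC = 0 := by
          by_contra hc
          have := le_trans (hI.best_vC (lt_of_le_of_ne hI.xvC_nonneg (Ne.symm hc)))
            (min_le_left _ _)
          linarith
        have hxvT : xvT = 0 := by
          by_contra hc
          have := le_trans (hI.best_vT (lt_of_le_of_ne hI.xvT_nonneg (Ne.symm hc)))
            (min_le_right _ _)
          linarith [hJRT']
        have hxvR : xvR = y := by linarith [hI.sum_v]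
        rw [hxvT, hxvR]
        linarith
      · rcases (mul_nonneg (mul_nonneg hB.ρu_nonneg
            (by linarith : (0:ℝ) ≤ 1 - sig β f t PB)) hy0).lt_or_eq with hU|hU
        · -- unsignaled Bayesian V2V drivers are Reckless
          have hcond := hB.best_ρu hU
          have hJTC' : r * PI * (1 - β * t) < (1 - PI) * (1 - β * f) := by
            have hs : 0 < r * (1 - β * t) + (1 - β * f) := by
              have := mul_nonneg (by linarith : (0:ℝ) ≤ r) h1βt
              linarith
            have hprod : 0 < (PB - PI) * (r * (1 - β * t) + (1 - β * f)) :=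
              mul_pos (sub_pos.2 hlt) hs
            linarith [hprod]
          have hxvC : xvC = 0 := by
            by_contra hc
            have := le_trans (hI.best_vC (lt_of_le_of_ne hI.xvC_nonneg (Ne.symm hc)))
              (min_le_right _ _)
            linarith [hJTC']
          have hsumv : xvR + xvT = y := by linarith [hI.sum_v]
          have hE : (1 - sig β f t PI) * (xvR + xvT) = (1 - sig β f t PI) * y := by
            rw [hsumv]
          linarith [mul_nonneg (mul_nonneg (by linarith : (0:ℝ) ≤ 1 - ρu)
              (by linarith : (0:ℝ) ≤ 1 - sig β f t PB)) hy0,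
            mul_nonneg (by linarith : (0:ℝ) ≤ sig β f t PB - sig β f t PI) hy0,
            mul_nonneg hσI0 hI.xvR_nonneg, hE, hS]
        · rw [← hU, ← hS]
          simpa using hMI0
    linarith
  have hPeq : PB = PI := le_antisymm (not_lt.1 key2) (not_lt.1 key1)
  subst hPeq
  -- cost equality at the common accident probability PB
  have hdegu : 1 - sig β f t PB = 0 →
      (1 - PB) * (1 - β * f) = 0 ∧ r * PB * (1 - β * t) = 0 := by
    intro h
    have hid : PB * (1 - β * t) + (1 - PB) * (1 - β * f) = 0 := by
      simp only [sig] at h; linarith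
    have ha : (1 - PB) * (1 - β * f) = 0 :=
      le_antisymm (by linarith [mul_nonneg hPB0 h1βt])
        (mul_nonneg (by linarith) h1βf.le)
    have hb' : PB * (1 - β * t) = 0 := by linarith
    exact ⟨ha, by linear_combination r * hb'⟩
  have hdegs : sig β f t PB = 0 →
      (1 - PB) * (β * f) = 0 ∧ r * PB * (β * t) = 0 := by
    intro h
    simp only [sig] at h
    have ha : β * (PB * t) = 0 := le_antisymm
      (by linarith [mul_nonneg hβ0 (mul_nonneg (by linarith : (0:ℝ) ≤ 1 - PB) hf)])
      (mul_nonneg hβ0 (mul_nonneg hPB0 ht0.le))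
    have hb' : β * ((1 - PB) * f) = 0 := by
      linarith [mul_nonneg hβ0 (mul_nonneg hPB0 ht0.le)]
    exact ⟨by linear_combination hb', by linear_combination r * ha⟩
  have hn := mass2 (1 - PB) (r * PB) xnC xnR hB.xnC_nonneg hB.xnR_nonneg
    hB.best_nC hB.best_nR
  rw [hB.sum_n] at hn
  have hn' := mass2 (1 - PB) (r * PB) xnC' xnR' hI.xnC_nonneg hI.xnR_nonneg
    hI.best_nC hI.best_nR
  rw [hI.sum_n] at hn'
  have hv := mass3 (1 - PB) (r * PB) ((1 - PB) * (β * f) + r * PB * (1 - β * t))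
    xvC xvR xvT hI.xvC_nonneg hI.xvR_nonneg hI.xvT_nonneg
    hI.best_vC hI.best_vR hI.best_vT
  rw [hI.sum_v] at hv
  have hu := pair_min ((1 - PB) * (1 - β * f)) (r * PB * (1 - β * t)) cu ρu
    (1 - sig β f t PB) y hy0 (by linarith) hB.cu_nonneg hB.ρu_nonneg hB.sum_u
    hdegu hB.best_cu hB.best_ρu
  have hs := pair_min ((1 - PB) * (β * f)) (r * PB * (β * t)) cs ρs
    (sig β f t PB) y hy0 hσB0 hB.cs_nonneg hB.ρs_nonneg hB.sum_s
    hdegs hB.best_cs hB.best_ρs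
  have hJA : min ((1 - PB) * (1 - β * f) + (1 - PB) * (β * f))
      (r * PB * (1 - β * t) + r * PB * (β * t))
      ≤ (1 - PB) * (1 - β * f) + r * PB * (β * t) := by
    rcases le_total ((1 - PB) * (β * f)) (r * PB * (β * t)) with h|h
    · exact le_trans (min_le_left _ _) (by linarith)
    · rcases hβ0.lt_or_eq with hb|hb
      · have h1 : r * PB * t ≤ (1 - PB) * f :=
          le_of_mul_le_mul_left (by linarith : β * (r * PB * t) ≤ β * ((1 - PB) * f)) hb
        have h2 : r * PB ≤ 1 - PB := by
          refine le_of_mul_le_mul_left (?_ : t * (r * PB) ≤ t * (1 - PB)) ht0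
          have := mul_nonneg (by linarith : (0:ℝ) ≤ 1 - PB) (by linarith : (0:ℝ) ≤ t - f)
          linarith
        refine le_trans (min_le_right _ _) ?_
        have hA : 0 ≤ r * PB * (β * (t - f)) :=
          mul_nonneg (mul_nonneg (by linarith) hPB0) (mul_nonneg hβ0 (by linarith))
        have hB2 : 0 ≤ (1 - PB - r * PB) * (1 - β * f) := mul_nonneg (by linarith) h1βf.le
        linarith
      · refine le_trans (min_le_left _ _) ?_
        exact le_of_eq (by rw [← hb]; ring)
  have hvmin := min_pair ((1 - PB) * (1 - β * f)) (r * PB * (1 - β * t))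
    ((1 - PB) * (β * f)) (r * PB * (β * t)) hJA
  rw [show (1 - PB) * (1 - β * f) + (1 - PB) * (β * f) = 1 - PB from by ring,
      show r * PB * (1 - β * t) + r * PB * (β * t) = r * PB from by ring,
      show r * PB * (1 - β * t) + (1 - PB) * (β * f)
        = (1 - PB) * (β * f) + r * PB * (1 - β * t) from by ring] at hvmin
  simp only [socialCostB, socialCostI]
  linear_combination hn + hu + hs + y * hvmin - hn' - hv
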